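/- arXiv:1403.2730 — 3 statements merged into one kernel-verified Lean document; each statement's English description precedes it below -/
import Mathlib

section
/- Let (E, ℰ, ν) be a measure space, let γ₁ > 0, γ₂ > 0, and let u, w : E → ℝ be measurable functions such that x ↦ γ₁·h(w(x)/γ₁) and x ↦ γ₂·h((u(x)−w(x))/γ₂) are ν-integrable. Then x ↦ (γ₁+γ₂)·h(u(x)/(γ₁+γ₂)) is ν-integrable and ∫ (γ₁+γ₂)·h(u(x)/(γ₁+γ₂)) dν(x) ≤ ∫ γ₁·h(w(x)/γ₁) dν(x) + ∫ γ₂·h((u(x)−w(x))/γ₂) dν(x). Moreover, if w = (γ₁/(γ₁+γ₂))·u, then the two sides are equal. -/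
/-!
The jump term `γ * h (u / γ)` is the perspective of the convex function `h`, and perspectives
of convex functions are subadditive: this is Jensen's inequality for `h` with weights
`γᵢ / (γ₁ + γ₂)` at the points `w / γ₁` and `(u - w) / γ₂`, whose barycentre is `u / (γ₁ + γ₂)`.
Equality holds when the two points coincide, which is the proportional splitting.
-/

open MeasureTheory Set

theorem ConvexOn.perspective_add_le {f : ℝ → ℝ} (hf : ConvexOn ℝ univ f) {a b : ℝ}
    (ha : 0 < a) (hb : 0 < b) (s t : ℝ) :
    (a + b) * f ((s + t) / (a + b)) ≤ a * f (s / a) + b * f (t / b) := by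
  have hab : 0 < a + b := add_pos ha hb
  have hmix : a / (a + b) * (s / a) + b / (a + b) * (t / b) = (s + t) / (a + b) := by
    field_simp
  have hjensen := hf.2 (mem_univ (s / a)) (mem_univ (t / b)) (div_pos ha hab).le
    (div_pos hb hab).le (by field_simp)
  rw [smul_eq_mul, smul_eq_mul, hmix, smul_eq_mul, smul_eq_mul] at hjensen
  calc (a + b) * f ((s + t) / (a + b))
      ≤ (a + b) * (a / (a + b) * f (s / a) + b / (a + b) * f (t / b)) :=
        mul_le_mul_of_nonneg_left hjensen hab.le
    _ = a * f (s / a) + b * f (t / b) := by field_simp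

theorem perspective_add_eq_of_div_eq (f : ℝ → ℝ) {a b : ℝ} (ha : 0 < a) (hb : 0 < b)
    {s t : ℝ} (hst : s / a = t / b) :
    (a + b) * f ((s + t) / (a + b)) = a * f (s / a) + b * f (t / b) := by
  have hsum : (s + t) / (a + b) = s / a := by
    rw [div_eq_div_iff (add_pos ha hb).ne' ha.ne']
    rw [div_eq_div_iff ha.ne' hb.ne'] at hst
    linarith
  rw [hsum, ← hst]
  ring

theorem convexOn_exp_sub_one_sub_id : ConvexOn ℝ univ (fun t : ℝ => Real.exp t - 1 - t) :=
  (convexOn_exp.add_const (-1)).sub (concaveOn_id convex_univ) |>.congr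
    (fun t _ => by simp [sub_eq_add_neg])

theorem exp_sub_one_sub_nonneg (t : ℝ) : 0 ≤ Real.exp t - 1 - t := by
  linarith [Real.add_one_le_exp t]

theorem entropic_jump_infconv_general
    {E : Type*} [MeasurableSpace E] (ν : Measure E)
    (γ₁ γ₂ : ℝ) (hγ₁ : 0 < γ₁) (hγ₂ : 0 < γ₂)
    (u w : E → ℝ) (hu : Measurable u)
    (hint₁ : Integrable (fun x => γ₁ * (Real.exp (w x / γ₁) - 1 - w x / γ₁)) ν)
    (hint₂ : Integrable
      (fun x => γ₂ * (Real.exp ((u x - w x) / γ₂) - 1 - (u x - w x) / γ₂)) ν) :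
    Integrable
        (fun x => (γ₁ + γ₂) * (Real.exp (u x / (γ₁ + γ₂)) - 1 - u x / (γ₁ + γ₂))) ν ∧
      (∫ x, (γ₁ + γ₂) * (Real.exp (u x / (γ₁ + γ₂)) - 1 - u x / (γ₁ + γ₂)) ∂ν) ≤
        (∫ x, γ₁ * (Real.exp (w x / γ₁) - 1 - w x / γ₁) ∂ν) +
          ∫ x, γ₂ * (Real.exp ((u x - w x) / γ₂) - 1 - (u x - w x) / γ₂) ∂ν ∧
      ((w = fun x => (γ₁ / (γ₁ + γ₂)) * u x) →
        (∫ x, (γ₁ + γ₂) * (Real.exp (u x / (γ₁ + γ₂)) - 1 - u x / (γ₁ + γ₂)) ∂ν) =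
          (∫ x, γ₁ * (Real.exp (w x / γ₁) - 1 - w x / γ₁) ∂ν) +
            ∫ x, γ₂ * (Real.exp ((u x - w x) / γ₂) - 1 - (u x - w x) / γ₂) ∂ν) := by
  have hpoint : ∀ x, (γ₁ + γ₂) * (Real.exp (u x / (γ₁ + γ₂)) - 1 - u x / (γ₁ + γ₂)) ≤
      γ₁ * (Real.exp (w x / γ₁) - 1 - w x / γ₁) +
        γ₂ * (Real.exp ((u x - w x) / γ₂) - 1 - (u x - w x) / γ₂) := fun x => by
    simpa only [add_sub_cancel] using
      convexOn_exp_sub_one_sub_id.perspective_add_le hγ₁ hγ₂ (w x) (u x - w x)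
  have hint : Integrable
      (fun x => (γ₁ + γ₂) * (Real.exp (u x / (γ₁ + γ₂)) - 1 - u x / (γ₁ + γ₂))) ν := by
    refine (hint₁.add hint₂).mono' (by fun_prop) (ae_of_all _ fun x => ?_)
    rw [Real.norm_of_nonneg (mul_nonneg (add_pos hγ₁ hγ₂).le (exp_sub_one_sub_nonneg _))]
    exact hpoint x
  refine ⟨hint, (integral_mono hint (hint₁.add hint₂) hpoint).trans_eq
    (integral_add hint₁ hint₂), ?_⟩
  rintro rfl
  rw [← integral_add hint₁ hint₂]
  refine integral_congr_ae (ae_of_all _ fun x => ?_)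
  have hsplit : γ₁ / (γ₁ + γ₂) * u x / γ₁ = (u x - γ₁ / (γ₁ + γ₂) * u x) / γ₂ := by
    field_simp
    ring
  simpa only [add_sub_cancel] using
    perspective_add_eq_of_div_eq (fun t => Real.exp t - 1 - t) hγ₁ hγ₂ hsplit

/-- Jump part of the inf-convolution of two entropic generators: with
`h t = exp t - 1 - t`, if `γ₁·h(w/γ₁)` and `γ₂·h((u-w)/γ₂)` are `ν`-integrable, then
`(γ₁+γ₂)·h(u/(γ₁+γ₂))` is `ν`-integrable, its integral is dominated by the sum of the two
integrals, and equality holds for the proportional splitting `w = γ₁u/(γ₁+γ₂)`. -/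
theorem entropic_jump_infconv
    {E : Type*} [MeasurableSpace E] (ν : Measure E)
    (γ₁ γ₂ : ℝ) (hγ₁ : 0 < γ₁) (hγ₂ : 0 < γ₂)
    (u w : E → ℝ) (hu : Measurable u) (hw : Measurable w)
    (hint₁ : Integrable (fun x => γ₁ * (Real.exp (w x / γ₁) - 1 - w x / γ₁)) ν)
    (hint₂ : Integrable
      (fun x => γ₂ * (Real.exp ((u x - w x) / γ₂) - 1 - (u x - w x) / γ₂)) ν) :
    Integrable
        (fun x => (γ₁ + γ₂) * (Real.exp (u x / (γ₁ + γ₂)) - 1 - u x / (γ₁ + γ₂))) ν ∧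
      (∫ x, (γ₁ + γ₂) * (Real.exp (u x / (γ₁ + γ₂)) - 1 - u x / (γ₁ + γ₂)) ∂ν) ≤
        (∫ x, γ₁ * (Real.exp (w x / γ₁) - 1 - w x / γ₁) ∂ν) +
          ∫ x, γ₂ * (Real.exp ((u x - w x) / γ₂) - 1 - (u x - w x) / γ₂) ∂ν ∧
      ((w = fun x => (γ₁ / (γ₁ + γ₂)) * u x) →
        (∫ x, (γ₁ + γ₂) * (Real.exp (u x / (γ₁ + γ₂)) - 1 - u x / (γ₁ + γ₂)) ∂ν) =
          (∫ x, γ₁ * (Real.exp (w x / γ₁) - 1 - w x / γ₁) ∂ν) +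
            ∫ x, γ₂ * (Real.exp ((u x - w x) / γ₂) - 1 - (u x - w x) / γ₂) ∂ν) :=
  entropic_jump_infconv_general ν γ₁ γ₂ hγ₁ hγ₂ u w hu hint₁ hint₂
end

section
/- Let H be a real inner product space, a ∈ ℝ, b > 0, and f : H → ℝ a function with f(x) ≤ a + b·‖x‖² for all x ∈ H. If x₀ ∈ H and p ∈ H satisfy the subgradient inequality f(x) ≥ f(x₀) + ⟪p, x − x₀⟫ for all x ∈ H, then ⟪p, x₀⟫ − f(x₀) ≥ ‖p‖²/(4b) − a, and consequently ‖p‖² ≤ 8b·(a − f(x₀)) + 16b²·‖x₀‖². -/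
open scoped RealInnerProductSpace

/-- Key estimate in the dual representation theorem: if `f ≤ a + b‖·‖²` on a real inner
product space and `p` is a subgradient of `f` at `x₀`, then
`⟪p,x₀⟫ - f(x₀) ≥ ‖p‖²/(4b) - a` and `‖p‖² ≤ 8b(a - f(x₀)) + 16b²‖x₀‖²`. -/
theorem subgradient_norm_estimate
    {H : Type*} [NormedAddCommGroup H] [InnerProductSpace ℝ H]
    (a b : ℝ) (hb : 0 < b) (f : H → ℝ)
    (hgrowth : ∀ x : H, f x ≤ a + b * ‖x‖ ^ 2)
    (x₀ p : H) (hsub : ∀ x : H, f x ≥ f x₀ + ⟪p, x - x₀⟫) :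
    ⟪p, x₀⟫ - f x₀ ≥ ‖p‖ ^ 2 / (4 * b) - a ∧
      ‖p‖ ^ 2 ≤ 8 * b * (a - f x₀) + 16 * b ^ 2 * ‖x₀‖ ^ 2 := by
  have h1 := hsub ((1 / (2 * b)) • p)
  have h2 := hgrowth ((1 / (2 * b)) • p)
  have hb' : b ≠ 0 := ne_of_gt hb
  have hinner : ⟪p, (1 / (2 * b)) • p - x₀⟫ = (1 / (2 * b)) * ‖p‖ ^ 2 - ⟪p, x₀⟫ := by
    rw [inner_sub_right, real_inner_smul_right, real_inner_self_eq_norm_sq]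
  have hnorm : ‖(1 / (2 * b)) • p‖ ^ 2 = (1 / (2 * b)) ^ 2 * ‖p‖ ^ 2 := by
    rw [norm_smul, mul_pow, Real.norm_eq_abs,
      abs_of_pos (by positivity : (0:ℝ) < 1 / (2 * b))]
  rw [hinner] at h1
  rw [hnorm] at h2
  have hthis := h1.trans h2
  have e1 : b * ((1 / (2 * b)) ^ 2 * ‖p‖ ^ 2) = ‖p‖ ^ 2 / (4 * b) := by
    field_simp; ring
  have e2 : 1 / (2 * b) * ‖p‖ ^ 2 - ‖p‖ ^ 2 / (4 * b) = ‖p‖ ^ 2 / (4 * b) := by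
    field_simp; ring
  rw [e1] at hthis
  have hq : ‖p‖ ^ 2 / (4 * b) ≤ ⟪p, x₀⟫ - f x₀ + a := by linarith
  have keyc : ‖p‖ ^ 2 ≤ 4 * b * (⟪p, x₀⟫ - f x₀ + a) := by
    rw [div_le_iff₀ (by positivity : (0:ℝ) < 4 * b)] at hq
    linarith [hq]
  have key : ⟪p, x₀⟫ - f x₀ ≥ ‖p‖ ^ 2 / (4 * b) - a := by linarith
  refine ⟨key, ?_⟩
  have hcs : ⟪p, x₀⟫ ≤ ‖p‖ * ‖x₀‖ := real_inner_le_norm p x₀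
  have hamgm : 8 * b * (‖p‖ * ‖x₀‖) ≤ ‖p‖ ^ 2 + 16 * b ^ 2 * ‖x₀‖ ^ 2 := by
    nlinarith [sq_nonneg (‖p‖ - 4 * b * ‖x₀‖)]
  nlinarith [keyc, mul_le_mul_of_nonneg_left hcs (by positivity : (0:ℝ) ≤ 4 * b), hamgm]
end

section
/- Let d ≥ 1 and let E = ℝᵈ (Euclidean space). Let f, g : E → ℝ be functions such that: g is convex on E; there exist a, b ≥ 0 with |f(x)| ≤ a + b·‖x‖² for all x; and there exists c > 0 such that x ↦ f(x) − (c/2)·‖x‖² is convex on E. Then for every x ∈ E the set { f(v) + g(x − v) : v ∈ E } is bounded below, and there exist constants a', b' ≥ 0 such that the inf-convolution (f □ g)(x) := inf_{v ∈ E} ( f(v) + g(x − v) ) satisfies |(f □ g)(x)| ≤ a' + b'·‖x‖² for all x ∈ E. -/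
/-!
A convex function that is continuous at `0` grows at least like `-K‖x‖`: convexity along the
segment from `x` to a short vector pointing the opposite way bounds `g x` below. Applied to `g`
and to `f - (c/2)‖·‖²`, this bounds `f v + g (x - v)` below by
`(c/2)‖v‖² - K''‖v‖ - K‖x‖ + const`, and minimising over `‖v‖` gives a bound `A - B‖x‖²`
uniform in `v`. The choice `v = x` bounds the infimum above by `f x + g 0`.
-/

open Set

lemma ConvexOn.exists_sub_mul_norm_le {E : Type*} [NormedAddCommGroup E] [NormedSpace ℝ E]
    {g : E → ℝ} (hg : ConvexOn ℝ univ g) (hg0 : ContinuousAt g 0) :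
    ∃ k K : ℝ, 0 ≤ K ∧ ∀ x, k - K * ‖x‖ ≤ g x := by
  obtain ⟨ρ, hρ, hbound⟩ : ∃ ρ > 0, ∀ y : E, ‖y‖ ≤ ρ → g y ≤ g 0 + 1 := by
    obtain ⟨δ, hδ, hball⟩ := Metric.continuousAt_iff.1 hg0 1 one_pos
    refine ⟨δ / 2, half_pos hδ, fun y hy => ?_⟩
    have := hball (by rw [dist_zero_right]; linarith)
    linarith [le_abs_self (g y - g 0), Real.dist_eq (g y) (g 0)]
  refine ⟨g 0, 1 / ρ, by positivity, fun x => ?_⟩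
  rcases eq_or_ne x 0 with rfl | hx
  · simp
  set n := ‖x‖
  have hn : 0 < n := norm_pos_iff.2 hx
  set y : E := -(ρ / n) • x
  have hy : g y ≤ g 0 + 1 := hbound y <| by
    rw [norm_smul, norm_neg, Real.norm_of_nonneg (by positivity), div_mul_cancel₀ _ hn.ne']
  have hcomb : (ρ / (ρ + n)) • x + (n / (ρ + n)) • y = 0 := by
    simp only [y, smul_smul, ← add_smul]
    field_simp
    simp
  have hconv := hg.2 (mem_univ x) (mem_univ y)
    (by positivity : 0 ≤ ρ / (ρ + n)) (by positivity : 0 ≤ n / (ρ + n)) (by field_simp)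
  rw [hcomb, smul_eq_mul, smul_eq_mul] at hconv
  field_simp at hconv
  rw [one_div_mul_eq_div, sub_le_comm, le_div_iff₀ hρ]
  nlinarith

lemma neg_sq_div_le_half_mul_sq_sub_mul {c : ℝ} (hc : 0 < c) (K r : ℝ) :
    -(K ^ 2 / (2 * c)) ≤ c / 2 * r ^ 2 - K * r := by
  rw [neg_le, le_div_iff₀ (by positivity)]
  nlinarith [sq_nonneg (c * r - K)]

lemma exists_quadratic_lower_bound_add_sub {E : Type*} [NormedAddCommGroup E] [NormedSpace ℝ E]
    [FiniteDimensional ℝ E] {f g : E → ℝ} {c : ℝ} (hc : 0 < c) (hg : ConvexOn ℝ univ g)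
    (hstrong : ConvexOn ℝ univ fun x => f x - c / 2 * ‖x‖ ^ 2) :
    ∃ A B : ℝ, 0 ≤ B ∧ ∀ x v, A - B * ‖x‖ ^ 2 ≤ f v + g (x - v) := by
  obtain ⟨k, K, hK, hgk⟩ :=
    hg.exists_sub_mul_norm_le hg.locallyLipschitz.continuous.continuousAt
  obtain ⟨k', K', -, hfk⟩ :=
    hstrong.exists_sub_mul_norm_le hstrong.locallyLipschitz.continuous.continuousAt
  refine ⟨k + k' - (K + K') ^ 2 / (2 * c) - K / 2, K / 2, by positivity, fun x v => ?_⟩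
  have hf := hfk v
  have hg := hgk (x - v)
  have htri : K * ‖x - v‖ ≤ K * ‖x‖ + K * ‖v‖ := by
    rw [← mul_add]; exact mul_le_mul_of_nonneg_left (norm_sub_le x v) hK
  have hsq : K * ‖x‖ ≤ K / 2 + K / 2 * ‖x‖ ^ 2 := by nlinarith [sq_nonneg (‖x‖ - 1)]
  have := neg_sq_div_le_half_mul_sq_sub_mul hc (K + K') ‖v‖
  linarith

lemma abs_iInf_le_of_quadratic_bounds {E : Type*} [NormedAddCommGroup E] {φ : E → E → ℝ}
    {A B a b : ℝ} (ha : 0 ≤ a) (hb : 0 ≤ b) (hB : 0 ≤ B)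
    (hlow : ∀ x v, A - B * ‖x‖ ^ 2 ≤ φ x v) (hup : ∀ x, φ x x ≤ a + b * ‖x‖ ^ 2) (x : E) :
    |⨅ v, φ x v| ≤ (|A| + a) + (B + b) * ‖x‖ ^ 2 := by
  have hinf_ge : A - B * ‖x‖ ^ 2 ≤ ⨅ v, φ x v := le_ciInf (hlow x)
  have hinf_le : ⨅ v, φ x v ≤ φ x x := ciInf_le ⟨_, forall_mem_range.2 (hlow x)⟩ x
  have := hup x
  have := neg_abs_le A
  rw [abs_le]
  constructor <;> nlinarith [sq_nonneg ‖x‖, abs_nonneg A]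

theorem inf_convolution_quadratic_growth_general
    (d : ℕ)
    (f g : EuclideanSpace ℝ (Fin d) → ℝ)
    (hg : ConvexOn ℝ Set.univ g)
    (a b : ℝ) (ha : 0 ≤ a) (hb : 0 ≤ b)
    (hf : ∀ x : EuclideanSpace ℝ (Fin d), |f x| ≤ a + b * ‖x‖ ^ 2)
    (c : ℝ) (hc : 0 < c)
    (hstrong : ConvexOn ℝ Set.univ
      (fun x : EuclideanSpace ℝ (Fin d) => f x - c / 2 * ‖x‖ ^ 2)) :
    (∀ x : EuclideanSpace ℝ (Fin d),
        BddBelow (Set.range fun v : EuclideanSpace ℝ (Fin d) => f v + g (x - v))) ∧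
      ∃ a' b' : ℝ, 0 ≤ a' ∧ 0 ≤ b' ∧
        ∀ x : EuclideanSpace ℝ (Fin d),
          |⨅ v : EuclideanSpace ℝ (Fin d), (f v + g (x - v))| ≤ a' + b' * ‖x‖ ^ 2 := by
  obtain ⟨A, B, hB, hlow⟩ := exists_quadratic_lower_bound_add_sub hc hg hstrong
  have hup : ∀ x, f x + g (x - x) ≤ (a + |g 0|) + b * ‖x‖ ^ 2 := fun x => by
    rw [sub_self]
    linarith [(abs_le.1 (hf x)).2, le_abs_self (g 0)]
  refine ⟨fun x => ⟨_, forall_mem_range.2 (hlow x)⟩, |A| + (a + |g 0|), B + b,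
    by positivity, by positivity, ?_⟩
  exact abs_iInf_le_of_quadratic_bounds (by positivity) hb hB hlow hup

/-- If `f` has quadratic growth and is strongly convex, and `g` is convex on `ℝᵈ`, then
the inf-convolution `f □ g` is well defined (the infimum is over a set bounded below) and
has quadratic growth. -/
theorem inf_convolution_quadratic_growth
    (d : ℕ) (hd : 1 ≤ d)
    (f g : EuclideanSpace ℝ (Fin d) → ℝ)
    (hg : ConvexOn ℝ Set.univ g)
    (a b : ℝ) (ha : 0 ≤ a) (hb : 0 ≤ b)
    (hf : ∀ x : EuclideanSpace ℝ (Fin d), |f x| ≤ a + b * ‖x‖ ^ 2)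
    (c : ℝ) (hc : 0 < c)
    (hstrong : ConvexOn ℝ Set.univ
      (fun x : EuclideanSpace ℝ (Fin d) => f x - c / 2 * ‖x‖ ^ 2)) :
    (∀ x : EuclideanSpace ℝ (Fin d),
        BddBelow (Set.range fun v : EuclideanSpace ℝ (Fin d) => f v + g (x - v))) ∧
      ∃ a' b' : ℝ, 0 ≤ a' ∧ 0 ≤ b' ∧
        ∀ x : EuclideanSpace ℝ (Fin d),
          |⨅ v : EuclideanSpace ℝ (Fin d), (f v + g (x - v))| ≤ a' + b' * ‖x‖ ^ 2 :=
  inf_convolution_quadratic_growth_general d f g hg a b ha hb hf c hc hstrong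
end
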